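/- arXiv:0911.1548 — 3 statements merged into one kernel-verified Lean document; each statement's English description precedes it below -/
import Mathlib

section
/- Let s ∈ [0,T). Assume Hypotheses (H). If u : [s,T]×ℝ^N → ℝ is bounded and continuous on [s,T]×ℝ^N, is continuously differentiable once with respect to t and twice with respect to x on (s,T]×ℝ^N, and satisfies D_t u(t,x) − (𝒜u)(t,x) ≤ 0 for every (t,x) ∈ (s,T]×ℝ^N as well as u(s,x) ≤ 0 for every x ∈ ℝ^N, then u(t,x) ≤ 0 for every (t,x) ∈ [s,T]×ℝ^N. -/
open Set Filter MeasureTheory Metric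
open scoped Topology ENNReal RealInnerProductSpace Classical

noncomputable section

/-- `ℝ^N` with the Euclidean norm. -/
abbrev ES (N : ℕ) := EuclideanSpace ℝ (Fin N)

/-- First-order partial derivative `D_i f` in the `i`-th coordinate direction. -/
def pd1 {N : ℕ} (f : ES N → ℝ) (i : Fin N) : ES N → ℝ :=
  fun x => fderiv ℝ f x (EuclideanSpace.single i 1)

/-- Second-order partial derivative `D_{ij} f`. -/
def pd2 {N : ℕ} (f : ES N → ℝ) (i j : Fin N) : ES N → ℝ := pd1 (pd1 f j) i

/-- Third-order partial derivative `D_{ijk} f`. -/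
def pd3 {N : ℕ} (f : ES N → ℝ) (i j k : Fin N) : ES N → ℝ := pd1 (pd2 f j k) i

/-- The nonautonomous elliptic operator
`(𝒜 φ)(t,x) = ∑ᵢⱼ qᵢⱼ(t,x) Dᵢⱼφ(x) + ∑ⱼ bⱼ(t,x) Dⱼφ(x) + c(t,x) φ(x)`. -/
def Aop {N : ℕ} (q : ℝ → ES N → Fin N → Fin N → ℝ) (b : ℝ → ES N → Fin N → ℝ)
    (c : ℝ → ES N → ℝ) (φ : ES N → ℝ) (t : ℝ) (x : ES N) : ℝ :=
  (∑ i, ∑ j, q t x i j * pd2 φ i j x) + (∑ j, b t x j * pd1 φ j x) + c t x * φ x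

/-- Membership in the parabolic Hölder space `C^{δ/2,δ}([0,T] × B(0,R))`. -/
def ParabolicHolderOn {N : ℕ} (T δ R : ℝ) (h : ℝ → ES N → ℝ) : Prop :=
  ∃ C : ℝ, ∀ t ∈ Icc (0:ℝ) T, ∀ s ∈ Icc (0:ℝ) T,
    ∀ x ∈ closedBall (0 : ES N) R, ∀ y ∈ closedBall (0 : ES N) R,
      |h t x - h s y| ≤ C * (|t - s| + ‖x - y‖ ^ 2) ^ (δ / 2)

/-- Hypotheses (H) of Lorenzi's paper (smooth unbounded coefficients). -/
structure Hyp (N : ℕ) (T : ℝ) (q : ℝ → ES N → Fin N → Fin N → ℝ)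
    (b : ℝ → ES N → Fin N → ℝ) (c : ℝ → ES N → ℝ) where
  T_pos : 0 < T
  N_pos : 1 ≤ N
  /- (i) smoothness in space and parabolic Hölder regularity up to third-order
     spatial derivatives on `[0,T] × B(0,R)` for every `R`. -/
  δ : ℝ
  δ_mem : δ ∈ Ioo (0:ℝ) 1
  smooth_q : ∀ t ∈ Icc (0:ℝ) T, ∀ i j, ContDiff ℝ 3 fun x => q t x i j
  smooth_b : ∀ t ∈ Icc (0:ℝ) T, ∀ j, ContDiff ℝ 3 fun x => b t x j
  smooth_c : ∀ t ∈ Icc (0:ℝ) T, ContDiff ℝ 3 fun x => c t x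
  holder_q : ∀ R > 0, ∀ i j, ParabolicHolderOn T δ R fun t x => q t x i j
  holder_q1 : ∀ R > 0, ∀ i j k, ParabolicHolderOn T δ R fun t x => pd1 (fun y => q t y i j) k x
  holder_q2 : ∀ R > 0, ∀ i j k l, ParabolicHolderOn T δ R fun t x => pd2 (fun y => q t y i j) k l x
  holder_q3 : ∀ R > 0, ∀ i j k l m, ParabolicHolderOn T δ R fun t x => pd3 (fun y => q t y i j) k l m x
  holder_b : ∀ R > 0, ∀ j, ParabolicHolderOn T δ R fun t x => b t x j
  holder_b1 : ∀ R > 0, ∀ j k, ParabolicHolderOn T δ R fun t x => pd1 (fun y => b t y j) k x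
  holder_b2 : ∀ R > 0, ∀ j k l, ParabolicHolderOn T δ R fun t x => pd2 (fun y => b t y j) k l x
  holder_b3 : ∀ R > 0, ∀ j k l m, ParabolicHolderOn T δ R fun t x => pd3 (fun y => b t y j) k l m x
  holder_c : ∀ R > 0, ParabolicHolderOn T δ R c
  holder_c1 : ∀ R > 0, ∀ k, ParabolicHolderOn T δ R fun t x => pd1 (c t) k x
  holder_c2 : ∀ R > 0, ∀ k l, ParabolicHolderOn T δ R fun t x => pd2 (c t) k l x
  holder_c3 : ∀ R > 0, ∀ k l m, ParabolicHolderOn T δ R fun t x => pd3 (c t) k l m x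
  /- (ii) symmetry and (uniform) ellipticity. -/
  q_symm : ∀ t ∈ Icc (0:ℝ) T, ∀ x i j, q t x i j = q t x j i
  ν : ℝ → ES N → ℝ
  ν₀ : ℝ
  ν₀_pos : 0 < ν₀
  ν_lb : ∀ t ∈ Icc (0:ℝ) T, ∀ x, ν₀ ≤ ν t x
  ellip : ∀ t ∈ Icc (0:ℝ) T, ∀ x, ∀ ξ : ES N, ν t x * ‖ξ‖ ^ 2 ≤ ∑ i, ∑ j, q t x i j * ξ i * ξ j
  /- (iii) growth conditions. -/
  C₁ : ℝ
  C₂ : ℝ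
  C₃ : ℝ
  C₁_pos : 0 < C₁
  C₂_pos : 0 < C₂
  C₃_pos : 0 < C₃
  growth_Q : ∀ t ∈ Icc (0:ℝ) T, ∀ x,
    ‖(EuclideanSpace.equiv (Fin N) ℝ).symm fun i => ∑ j, q t x i j * x j‖
      ≤ C₁ * (1 + ‖x‖ ^ 2) * ν t x
  growth_tr : ∀ t ∈ Icc (0:ℝ) T, ∀ x, (∑ i, q t x i i) ≤ C₂ * (1 + ‖x‖ ^ 2) * ν t x
  growth_b : ∀ t ∈ Icc (0:ℝ) T, ∀ x, (∑ j, b t x j * x j) ≤ C₃ * (1 + ‖x‖ ^ 2) * ν t x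
  /- (iv) `c` is bounded from above. -/
  c₀ : ℝ
  c_ub : ∀ t ∈ Icc (0:ℝ) T, ∀ x, c t x ≤ c₀
  /- (v) bounds on the derivatives of the diffusion coefficients. -/
  K₁ : ℝ
  K₂ : ℝ
  K₃ : ℝ
  K₁_pos : 0 < K₁
  K₂_pos : 0 < K₂
  K₃_pos : 0 < K₃
  dq1_bound : ∀ t ∈ Icc (0:ℝ) T, ∀ x i j k, |pd1 (fun y => q t y i j) k x| ≤ K₁ * ν t x
  dq3_bound : ∀ t ∈ Icc (0:ℝ) T, ∀ x i j k l m, |pd3 (fun y => q t y i j) k l m x| ≤ K₃ * ν t x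
  dq2_quad : ∀ t ∈ Icc (0:ℝ) T, ∀ x, ∀ Ξ : Fin N → Fin N → ℝ, (∀ h k, Ξ h k = Ξ k h) →
    (∑ h, ∑ k, ∑ l, ∑ m, pd2 (fun y => q t y h k) l m x * Ξ h k * Ξ l m)
      ≤ K₂ * ν t x * ∑ h, ∑ k, Ξ h k ^ 2
  /- (vi) dissipativity and bounds on the derivatives of the drift and of `c`. -/
  d : ℝ → ES N → ℝ
  r : ℝ → ES N → ℝ
  ϱ : ℝ → ES N → ℝ
  ϱ₀ : ℝ
  ϱ₀_pos : 0 < ϱ₀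
  ϱ_lb : ∀ t ∈ Icc (0:ℝ) T, ∀ x, ϱ₀ ≤ ϱ t x
  L₁ : ℝ
  L₂ : ℝ
  L₃ : ℝ
  L₁_pos : 0 < L₁
  L₂_pos : 0 < L₂
  L₃_pos : 0 < L₃
  dissip : ∀ t ∈ Icc (0:ℝ) T, ∀ x, ∀ ξ : ES N,
    (∑ i, ∑ j, pd1 (fun y => b t y i) j x * ξ j * ξ i) ≤ d t x * ‖ξ‖ ^ 2
  db2_bound : ∀ t ∈ Icc (0:ℝ) T, ∀ x j k l, |pd2 (fun y => b t y j) k l x| ≤ r t x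
  db3_bound : ∀ t ∈ Icc (0:ℝ) T, ∀ x j k l m, |pd3 (fun y => b t y j) k l m x| ≤ r t x
  dc1_bound : ∀ t ∈ Icc (0:ℝ) T, ∀ x k, |pd1 (c t) k x| ≤ ϱ t x
  dc2_bound : ∀ t ∈ Icc (0:ℝ) T, ∀ x k l, |pd2 (c t) k l x| ≤ ϱ t x
  dc3_bound : ∀ t ∈ Icc (0:ℝ) T, ∀ x k l m, |pd3 (c t) k l m x| ≤ ϱ t x
  funz : ∀ t ∈ Icc (0:ℝ) T, ∀ x, d t x + L₁ * r t x + L₂ * ϱ t x ^ 2 ≤ L₃ * ν t x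
  /- (vii) existence of a Lyapunov function. -/
  liap : ∃ φ : ES N → ℝ, ∃ lam : ℝ, 0 < lam ∧ (∀ x, 0 < φ x) ∧ ContDiff ℝ 2 φ ∧
    Tendsto φ (cocompact (ES N)) atTop ∧
    ∃ M : ℝ, ∀ t ∈ Icc (0:ℝ) T, ∀ x, Aop q b c φ t x - lam * φ x ≤ M

/-- `u` is a bounded classical solution on `[s,τ] × ℝ^N` of the homogeneous Cauchy problem
`D_t u = 𝒜 u`, `u(s,·) = f`: it is bounded and continuous on `[s,τ] × ℝ^N`, continuously
differentiable once in time and twice in space on `(s,τ] × ℝ^N`, satisfies the equation there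
and attains the initial datum `f` at time `s`. -/
def IsBCSol {N : ℕ} (q : ℝ → ES N → Fin N → Fin N → ℝ) (b : ℝ → ES N → Fin N → ℝ)
    (c : ℝ → ES N → ℝ) (s τ : ℝ) (f : ES N → ℝ) (u : ℝ → ES N → ℝ) : Prop :=
  (∃ M, ∀ t ∈ Icc s τ, ∀ x, |u t x| ≤ M) ∧
  ContinuousOn (fun p : ℝ × ES N => u p.1 p.2) (Icc s τ ×ˢ univ) ∧
  (∀ t ∈ Ioc s τ, ContDiff ℝ 2 (u t)) ∧
  (∀ x, ∀ t ∈ Ioc s τ, DifferentiableAt ℝ (fun t' => u t' x) t) ∧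
  ContinuousOn (fun p : ℝ × ES N => deriv (fun t' => u t' p.2) p.1) (Ioc s τ ×ˢ univ) ∧
  (∀ i, ContinuousOn (fun p : ℝ × ES N => pd1 (u p.1) i p.2) (Ioc s τ ×ˢ univ)) ∧
  (∀ i j, ContinuousOn (fun p : ℝ × ES N => pd2 (u p.1) i j p.2) (Ioc s τ ×ˢ univ)) ∧
  (∀ t ∈ Ioc s τ, ∀ x, deriv (fun t' => u t' x) t = Aop q b c (u t) t x) ∧
  (∀ x, u s x = f x)

/-- `u` is a bounded classical solution on `[0,T] × ℝ^N` of the nonhomogeneous Cauchy problem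
`D_t u = 𝒜 u + g`, `u(0,·) = f`, continuously differentiable once in time and twice in space
on all of `[0,T] × ℝ^N`. -/
def IsBCSolInhom {N : ℕ} (q : ℝ → ES N → Fin N → Fin N → ℝ) (b : ℝ → ES N → Fin N → ℝ)
    (c : ℝ → ES N → ℝ) (T : ℝ) (f : ES N → ℝ) (g : ℝ → ES N → ℝ) (u : ℝ → ES N → ℝ) : Prop :=
  (∃ M, ∀ t ∈ Icc (0:ℝ) T, ∀ x, |u t x| ≤ M) ∧
  (∀ t ∈ Icc (0:ℝ) T, ContDiff ℝ 2 (u t)) ∧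
  (∀ x, ∀ t ∈ Icc (0:ℝ) T, DifferentiableWithinAt ℝ (fun t' => u t' x) (Icc (0:ℝ) T) t) ∧
  ContinuousOn (fun p : ℝ × ES N => derivWithin (fun t' => u t' p.2) (Icc (0:ℝ) T) p.1)
    (Icc (0:ℝ) T ×ˢ univ) ∧
  (∀ i, ContinuousOn (fun p : ℝ × ES N => pd1 (u p.1) i p.2) (Icc (0:ℝ) T ×ˢ univ)) ∧
  (∀ i j, ContinuousOn (fun p : ℝ × ES N => pd2 (u p.1) i j p.2) (Icc (0:ℝ) T ×ˢ univ)) ∧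
  (∀ t ∈ Icc (0:ℝ) T, ∀ x,
    derivWithin (fun t' => u t' x) (Icc (0:ℝ) T) t = Aop q b c (u t) t x + g t x) ∧
  (∀ x, u 0 x = f x)

/-- Extended-real sup norm of the `k`-th derivative. -/
def supNormE {N : ℕ} (k : ℕ) (f : ES N → ℝ) : ℝ≥0∞ :=
  ⨆ x : ES N, ENNReal.ofReal ‖iteratedFDeriv ℝ k f x‖

/-- Extended-real `γ`-Hölder seminorm of the `k`-th derivative. -/
def holderSemiE {N : ℕ} (k : ℕ) (γ : ℝ) (f : ES N → ℝ) : ℝ≥0∞ :=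
  ⨆ (x : ES N) (y : ES N) (_ : x ≠ y),
    ENNReal.ofReal (‖iteratedFDeriv ℝ k f x - iteratedFDeriv ℝ k f y‖ / ‖x - y‖ ^ γ)

/-- The `C^α_b(ℝ^N)` norm (valued in `[0,∞]`): sup norms of the derivatives up to order `⌊α⌋`
plus, when `α ∉ ℕ`, the `(α-⌊α⌋)`-Hölder seminorm of the `⌊α⌋`-th order derivatives. -/
def CbNorm {N : ℕ} (α : ℝ) (f : ES N → ℝ) : ℝ≥0∞ :=
  (∑ k ∈ Finset.range (⌊α⌋₊ + 1), supNormE k f) +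
    (if (⌊α⌋₊ : ℝ) = α then 0 else holderSemiE ⌊α⌋₊ (α - ⌊α⌋₊) f)

/-- Membership in `C^α_b(ℝ^N)`. -/
def MemCb {N : ℕ} (α : ℝ) (f : ES N → ℝ) : Prop :=
  ContDiff ℝ (⌊α⌋₊ : ℕ) f ∧ CbNorm α f ≠ ⊤

/-!
Weighting by `e^{-a(t-s)}` with `a ≥ max(sup c, 0)` turns `u` into a subsolution for the potential
`c - a ≤ 0`, so one may assume `c ≤ 0`. Choose `K` with `λK > M`; then
`ψ = e^{λ(t-s)}(φ + K)` is a strict supersolution, so `u - εψ` is a strict subsolution that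
tends to `-∞` at spatial infinity and therefore attains its maximum on `[s,T] × ℝ^N`. At a
maximum point with `t₀ > s` the time derivative is `≥ 0`, the gradient vanishes and the Hessian
is negative semidefinite, so by ellipticity `𝒜(u - εψ) ≤ c (u - εψ)`, which is `≤ 0` where
`u - εψ > 0`; this contradicts strictness. Hence `u ≤ εψ` for every `ε > 0`.
-/

theorem IsLocalMax.deriv_deriv_nonpos {f : ℝ → ℝ} {x₀ : ℝ} (h : IsLocalMax f x₀)
    (hc : ContinuousAt f x₀) : deriv (deriv f) x₀ ≤ 0 := by
  by_contra! hpos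
  have hconst : f =ᶠ[𝓝 x₀] fun _ => f x₀ :=
    (h.and (isLocalMin_of_deriv_deriv_pos hpos h.deriv_eq_zero hc)).mono
      fun _ hx => le_antisymm hx.1 hx.2
  have hderiv : deriv f =ᶠ[𝓝 x₀] fun _ => 0 :=
    hconst.eventuallyEq_nhds.mono fun _ hy => by rw [hy.deriv_eq, deriv_const]
  rw [hderiv.deriv_eq, deriv_const] at hpos
  exact hpos.false

theorem IsLocalMax.fderiv_fderiv_apply_self_nonpos {E : Type*} [NormedAddCommGroup E]
    [NormedSpace ℝ E] {w : E → ℝ} {x₀ : E} (h : IsLocalMax w x₀) (hw : Differentiable ℝ w)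
    (hw' : DifferentiableAt ℝ (fderiv ℝ w) x₀) (ξ : E) : fderiv ℝ (fderiv ℝ w) x₀ ξ ξ ≤ 0 := by
  set γ : ℝ → E := fun r => x₀ + r • ξ
  have hγ : ∀ r, HasDerivAt γ ξ r := fun r => by
    simpa only [id, one_smul] using ((hasDerivAt_id r).smul_const ξ).const_add x₀
  have hγ0 : γ 0 = x₀ := by simp [γ]
  have hderiv : deriv (w ∘ γ) = fun r => fderiv ℝ w (γ r) ξ :=
    funext fun r => ((hw _).hasFDerivAt.comp_hasDerivAt r (hγ r)).deriv
  have hsecond : HasDerivAt (fun r => fderiv ℝ w (γ r) ξ) (fderiv ℝ (fderiv ℝ w) x₀ ξ ξ) 0 := by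
    have := ((hγ0 ▸ hw').hasFDerivAt.comp_hasDerivAt 0 (hγ 0)).clm_apply (hasDerivAt_const 0 ξ)
    simpa [hγ0] using this
  rw [← hsecond.deriv, ← hderiv]
  exact (hγ0 ▸ h).comp_continuous (hγ 0).continuousAt |>.deriv_deriv_nonpos
    (hw.continuous.continuousAt.comp (hγ 0).continuousAt)

theorem Matrix.PosSemidef.sum_mul_apply_nonpos {ι E : Type*} [Fintype ι] [AddCommGroup E]
    [Module ℝ E] {Q : Matrix ι ι ℝ} (hQ : Q.PosSemidef) (B : E →ₗ[ℝ] E →ₗ[ℝ] ℝ)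
    (hB : ∀ ξ, B ξ ξ ≤ 0) (e : ι → E) : ∑ i, ∑ j, Q i j * B (e i) (e j) ≤ 0 := by
  obtain ⟨m, v, rfl⟩ := Matrix.posSemidef_iff_eq_sum_vecMulVec.mp hQ
  calc ∑ i, ∑ j, (∑ k, vecMulVec (v k) (star (v k))) i j * B (e i) (e j)
      = ∑ k, B (∑ i, v k i • e i) (∑ j, v k j • e j) := by
        simp only [Matrix.sum_apply _ _ Finset.univ, vecMulVec_apply, star_trivial, map_sum,
          map_smul, LinearMap.sum_apply, LinearMap.smul_apply, smul_eq_mul, Finset.sum_mul,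
          Finset.mul_sum]
        simp_rw [Finset.sum_comm (γ := ι) (α := Fin m)]
        refine Finset.sum_congr rfl fun k _ => ?_
        rw [Finset.sum_comm]
        exact Finset.sum_congr rfl fun i _ => Finset.sum_congr rfl fun j _ => by ring
    _ ≤ 0 := Finset.sum_nonpos fun k _ => hB _

theorem IsMaxOn.nonneg_of_hasDerivWithinAt_Icc {f : ℝ → ℝ} {a b f' : ℝ} (hab : a < b)
    (hmax : IsMaxOn f (Icc a b) b) (hf : HasDerivWithinAt f f' (Icc a b) b) : 0 ≤ f' := by
  have hy : a - b ∈ posTangentConeAt (Icc a b) b :=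
    sub_mem_posTangentConeAt_of_segment_subset (by rw [segment_symm, segment_eq_Icc hab.le])
  have := hmax.localize.hasFDerivWithinAt_nonpos hf hy
  simp only [ContinuousLinearMap.toSpanSingleton_apply, smul_eq_mul] at this
  nlinarith

theorem exists_isMaxOn_prod_univ {α β : Type*} [TopologicalSpace α] [TopologicalSpace β]
    {I : Set α} (hI : IsCompact I) (hIc : IsClosed I) {v : α × β → ℝ}
    (hv : ContinuousOn v (I ×ˢ univ)) {p : α × β} (hp : p ∈ I ×ˢ univ)
    (hcoc : ∀ᶠ x in cocompact β, ∀ t ∈ I, v (t, x) ≤ v p) :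
    ∃ p₀ ∈ I ×ˢ univ, IsMaxOn v (I ×ˢ univ) p₀ := by
  refine hv.exists_isMaxOn' (hIc.prod isClosed_univ) hp ?_
  obtain ⟨K, hK, hKv⟩ := hasBasis_cocompact.eventually_iff.1 hcoc
  rw [eventually_inf_principal]
  filter_upwards [(hI.prod hK).compl_mem_cocompact] with q hq hqI
  exact hKv (fun hx => hq ⟨hqI.1, hx⟩) q.1 hqI.1

section PartialDerivatives

variable {N : ℕ} {f g : ES N → ℝ} {x : ES N}

theorem ContDiff.differentiable_pd1 (hf : ContDiff ℝ 2 f) (j : Fin N) :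
    Differentiable ℝ (pd1 f j) :=
  fun x => ((hf.fderiv_right le_rfl).differentiable one_ne_zero x).clm_apply
    (differentiableAt_const _)

theorem pd2_eq_fderiv_fderiv (hf : ContDiff ℝ 2 f) (i j : Fin N) (x : ES N) :
    pd2 f i j x
      = fderiv ℝ (fderiv ℝ f) x (EuclideanSpace.single i 1) (EuclideanSpace.single j 1) := by
  have hd : DifferentiableAt ℝ (fderiv ℝ f) x :=
    (hf.fderiv_right le_rfl).differentiable one_ne_zero x
  unfold pd2 pd1
  rw [fderiv_clm_apply hd (differentiableAt_const _)]
  simp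

theorem pd1_const_mul (a : ℝ) (j : Fin N) (x : ES N) :
    pd1 (fun y => a * f y) j x = a * pd1 f j x := by
  simp [pd1, show (fun y => a * f y) = a • f from rfl, fderiv_const_smul_field]

theorem pd2_const_mul (a : ℝ) (i j : Fin N) (x : ES N) :
    pd2 (fun y => a * f y) i j x = a * pd2 f i j x := by
  simp only [pd2, funext (pd1_const_mul (f := f) a j), pd1_const_mul]

theorem pd1_add_const (K : ℝ) : pd1 (fun y => f y + K) = pd1 f := by
  ext j x
  simp [pd1, fderiv_add_const]

theorem pd1_sub (hf : DifferentiableAt ℝ f x) (hg : DifferentiableAt ℝ g x) (j : Fin N) :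
    pd1 (fun y => f y - g y) j x = pd1 f j x - pd1 g j x := by
  simp [pd1, fderiv_fun_sub hf hg]

theorem pd2_sub (hf : ContDiff ℝ 2 f) (hg : ContDiff ℝ 2 g) (i j : Fin N) :
    pd2 (fun y => f y - g y) i j x = pd2 f i j x - pd2 g i j x := by
  have h1 : pd1 (fun y => f y - g y) j = fun y => pd1 f j y - pd1 g j y :=
    funext fun y => pd1_sub (hf.differentiable two_ne_zero y) (hg.differentiable two_ne_zero y) j
  rw [pd2, h1, pd1_sub ((hf.differentiable_pd1 j) x) ((hg.differentiable_pd1 j) x)]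
  rfl

end PartialDerivatives

section EllipticOperator

variable {N : ℕ} {q : ℝ → ES N → Fin N → Fin N → ℝ} {b : ℝ → ES N → Fin N → ℝ}
  {c : ℝ → ES N → ℝ} {f g : ES N → ℝ} {t : ℝ} {x : ES N}

theorem Aop_const_mul (a : ℝ) :
    Aop q b c (fun y => a * f y) t x = a * Aop q b c f t x := by
  simp only [Aop, pd1_const_mul, pd2_const_mul, mul_add, Finset.mul_sum, mul_left_comm a]

theorem Aop_add_const (K : ℝ) : Aop q b c (fun y => f y + K) t x = Aop q b c f t x + c t x * K := by
  simp only [Aop, pd2, pd1_add_const]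
  ring

theorem Aop_sub (hf : ContDiff ℝ 2 f) (hg : ContDiff ℝ 2 g) :
    Aop q b c (fun y => f y - g y) t x = Aop q b c f t x - Aop q b c g t x := by
  simp only [Aop, pd2_sub hf hg, pd1_sub (hf.differentiable two_ne_zero x)
    (hg.differentiable two_ne_zero x), mul_sub, Finset.sum_sub_distrib]
  ring

theorem Aop_sub_const_potential (a : ℝ) :
    Aop q b (fun t x => c t x - a) f t x = Aop q b c f t x - a * f x := by
  simp only [Aop]
  ring

theorem Aop_le_of_isLocalMax (hf : ContDiff ℝ 2 f) (hmax : IsLocalMax f x)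
    (hQ : (Matrix.of fun i j => q t x i j).PosSemidef) : Aop q b c f t x ≤ c t x * f x := by
  have hgrad : ∀ j, pd1 f j x = 0 := fun j => by simp [pd1, hmax.fderiv_eq_zero]
  have hhess : ∑ i, ∑ j, q t x i j * pd2 f i j x ≤ 0 := by
    simp only [pd2_eq_fderiv_fderiv hf]
    exact hQ.sum_mul_apply_nonpos (fderiv ℝ (fderiv ℝ f) x).toLinearMap₁₂
      (hmax.fderiv_fderiv_apply_self_nonpos (hf.differentiable two_ne_zero)
        ((hf.fderiv_right le_rfl).differentiable one_ne_zero x)) _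
  simp only [Aop, hgrad, mul_zero, Finset.sum_const_zero, add_zero]
  linarith

end EllipticOperator

section ParabolicOperator

variable {N : ℕ} {q : ℝ → ES N → Fin N → Fin N → ℝ} {b : ℝ → ES N → Fin N → ℝ}
  {c : ℝ → ES N → ℝ} {s T : ℝ}

def parabolicOp (q : ℝ → ES N → Fin N → Fin N → ℝ) (b : ℝ → ES N → Fin N → ℝ)
    (c : ℝ → ES N → ℝ) (v : ℝ → ES N → ℝ) (t : ℝ) (x : ES N) : ℝ :=
  deriv (fun t' => v t' x) t - Aop q b c (v t) t x

/-- The regularity of `C([s,T] × ℝ^N) ∩ C^{1,2}((s,T] × ℝ^N)` that the maximum principle uses: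
the derivatives need not be continuous. -/
structure IsC12On (s T : ℝ) (v : ℝ → ES N → ℝ) : Prop where
  continuousOn : ContinuousOn (Function.uncurry v) (Icc s T ×ˢ univ)
  contDiff : ∀ t ∈ Ioc s T, ContDiff ℝ 2 (v t)
  differentiableAt : ∀ x, ∀ t ∈ Ioc s T, DifferentiableAt ℝ (fun t' => v t' x) t

theorem isC12On_of_contDiff {w : ES N → ℝ} (hw : ContDiff ℝ 2 w) :
    IsC12On s T fun _ x => w x :=
  ⟨(hw.continuous.comp continuous_snd).continuousOn, fun _ _ => hw,
    fun _ _ _ => differentiableAt_const _⟩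

theorem IsC12On.sub {v w : ℝ → ES N → ℝ} (hv : IsC12On s T v) (hw : IsC12On s T w) :
    IsC12On s T fun t x => v t x - w t x :=
  ⟨hv.continuousOn.sub hw.continuousOn, fun t ht => (hv.contDiff t ht).sub (hw.contDiff t ht),
    fun x t ht => (hv.differentiableAt x t ht).sub (hw.differentiableAt x t ht)⟩

theorem IsC12On.time_mul {g : ℝ → ℝ} {v : ℝ → ES N → ℝ} (hg : Differentiable ℝ g)
    (hv : IsC12On s T v) : IsC12On s T fun t x => g t * v t x :=
  ⟨(hg.continuous.comp continuous_fst).continuousOn.mul hv.continuousOn,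
    fun t ht => contDiff_const.mul (hv.contDiff t ht),
    fun x t ht => (hg t).mul (hv.differentiableAt x t ht)⟩

theorem parabolicOp_sub {v w : ℝ → ES N → ℝ} (hv : IsC12On s T v) (hw : IsC12On s T w)
    {t : ℝ} (ht : t ∈ Ioc s T) (x : ES N) :
    parabolicOp q b c (fun t x => v t x - w t x) t x
      = parabolicOp q b c v t x - parabolicOp q b c w t x := by
  simp only [parabolicOp, deriv_fun_sub (hv.differentiableAt x t ht) (hw.differentiableAt x t ht),
    Aop_sub (hv.contDiff t ht) (hw.contDiff t ht)]
  ring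

theorem parabolicOp_time_mul {g : ℝ → ℝ} {v : ℝ → ES N → ℝ} {t : ℝ} {x : ES N}
    (hg : DifferentiableAt ℝ g t) (hv : DifferentiableAt ℝ (fun t' => v t' x) t) :
    parabolicOp q b c (fun t x => g t * v t x) t x
      = deriv g t * v t x + g t * parabolicOp q b c v t x := by
  simp only [parabolicOp, deriv_fun_mul hg hv, Aop_const_mul]
  ring

theorem parabolicOp_time_indep (w : ES N → ℝ) (t : ℝ) (x : ES N) :
    parabolicOp q b c (fun _ x => w x) t x = -Aop q b c w t x := by
  simp [parabolicOp]

theorem parabolicOp_exp_mul (a : ℝ) {v : ℝ → ES N → ℝ} {t : ℝ} {x : ES N}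
    (hv : DifferentiableAt ℝ (fun t' => v t' x) t) :
    parabolicOp q b (fun t x => c t x - a) (fun t x => Real.exp (-a * (t - s)) * v t x) t x
      = Real.exp (-a * (t - s)) * parabolicOp q b c v t x := by
  have hexp : HasDerivAt (fun t => Real.exp (-a * (t - s))) (Real.exp (-a * (t - s)) * -a) t := by
    simpa using (((hasDerivAt_id t).sub_const s).const_mul (-a)).exp
  have hshift : ∀ w : ℝ → ES N → ℝ, parabolicOp q b (fun t x => c t x - a) w t x
      = parabolicOp q b c w t x + a * w t x := fun w => by
    simp only [parabolicOp, Aop_sub_const_potential]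
    ring
  rw [hshift, parabolicOp_time_mul hexp.differentiableAt hv, hexp.deriv]
  ring

end ParabolicOperator

section MaximumPrinciple

variable {N : ℕ} {q : ℝ → ES N → Fin N → Fin N → ℝ} {b : ℝ → ES N → Fin N → ℝ}
  {c : ℝ → ES N → ℝ} {s T : ℝ}

theorem Hyp.posSemidef (H : Hyp N T q b c) {t : ℝ} (ht : t ∈ Icc 0 T) (x : ES N) :
    (Matrix.of fun i j => q t x i j).PosSemidef := by
  refine .of_dotProduct_mulVec_nonneg ?_ fun y => ?_
  · ext i j
    exact H.q_symm t ht x j i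
  · have hν : 0 ≤ H.ν t x := H.ν₀_pos.le.trans (H.ν_lb t ht x)
    calc 0 ≤ H.ν t x * ‖WithLp.toLp 2 y‖ ^ 2 := by positivity
      _ ≤ ∑ i, ∑ j, q t x i j * y i * y j := H.ellip t ht x (WithLp.toLp 2 y)
      _ = star y ⬝ᵥ (Matrix.of fun i j => q t x i j).mulVec y := by
        simp only [dotProduct, Matrix.mulVec, Matrix.of_apply, star_trivial, Finset.mul_sum]
        exact Finset.sum_congr rfl fun i _ => Finset.sum_congr rfl fun j _ => by ring

theorem IsMaxOn.nonpos_of_parabolicOp_neg {v : ℝ → ES N → ℝ} {t₀ : ℝ} {x₀ : ES N}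
    (hmax : IsMaxOn (Function.uncurry v) (Icc s T ×ˢ univ) (t₀, x₀)) (ht₀ : t₀ ∈ Ioc s T)
    (hQ : (Matrix.of fun i j => q t₀ x₀ i j).PosSemidef) (hc : c t₀ x₀ ≤ 0)
    (hvx : ContDiff ℝ 2 (v t₀)) (hvt : DifferentiableAt ℝ (fun t => v t x₀) t₀)
    (hneg : parabolicOp q b c v t₀ x₀ < 0) : v t₀ x₀ ≤ 0 := by
  have htime : 0 ≤ deriv (fun t => v t x₀) t₀ :=
    IsMaxOn.nonneg_of_hasDerivWithinAt_Icc ht₀.1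
      (fun t ht => isMaxOn_iff.1 hmax (t, x₀) ⟨⟨ht.1, ht.2.trans ht₀.2⟩, mem_univ _⟩)
      hvt.hasDerivAt.hasDerivWithinAt
  have hspace : Aop q b c (v t₀) t₀ x₀ ≤ c t₀ x₀ * v t₀ x₀ :=
    Aop_le_of_isLocalMax hvx
      (Eventually.of_forall fun y => isMaxOn_iff.1 hmax (t₀, y) ⟨⟨ht₀.1.le, ht₀.2⟩, mem_univ y⟩) hQ
  by_contra! hpos
  have := mul_nonpos_of_nonpos_of_nonneg hc hpos.le
  unfold parabolicOp at hneg
  linarith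

variable (hQ : ∀ t ∈ Ioc s T, ∀ x, (Matrix.of fun i j => q t x i j).PosSemidef)
  (hc : ∀ t ∈ Ioc s T, ∀ x, c t x ≤ 0)
include hQ hc

theorem nonpos_of_parabolicOp_neg {v : ℝ → ES N → ℝ} (hv : IsC12On s T v)
    (hneg : ∀ t ∈ Ioc s T, ∀ x, parabolicOp q b c v t x < 0) (hinit : ∀ x, v s x ≤ 0)
    (hcoc : ∀ᶠ x in cocompact (ES N), ∀ t ∈ Icc s T, v t x ≤ 0) :
    ∀ t ∈ Icc s T, ∀ x, v t x ≤ 0 := by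
  by_contra! ⟨t₁, ht₁, x₁, hpos⟩
  obtain ⟨⟨t₀, x₀⟩, ⟨ht₀, -⟩, hmax⟩ :=
    exists_isMaxOn_prod_univ isCompact_Icc isClosed_Icc hv.continuousOn (p := (t₁, x₁))
      ⟨ht₁, mem_univ _⟩ (hcoc.mono fun x hx t ht => (hx t ht).trans hpos.le)
  have hpos₀ : 0 < v t₀ x₀ := hpos.trans_le (isMaxOn_iff.1 hmax (t₁, x₁) ⟨ht₁, mem_univ _⟩)
  rcases ht₀.1.eq_or_lt with rfl | hst₀
  · linarith [hinit x₀]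
  · have ht₀' : t₀ ∈ Ioc s T := ⟨hst₀, ht₀.2⟩
    linarith [hmax.nonpos_of_parabolicOp_neg ht₀' (hQ _ ht₀' _) (hc _ ht₀' _)
      (hv.contDiff _ ht₀') (hv.differentiableAt _ _ ht₀') (hneg _ ht₀' _)]

theorem nonpos_of_parabolicOp_nonpos_of_barrier {u ψ : ℝ → ES N → ℝ} (hu : IsC12On s T u)
    (hu_bdd : ∃ M, ∀ t ∈ Icc s T, ∀ x, u t x ≤ M)
    (hu_sub : ∀ t ∈ Ioc s T, ∀ x, parabolicOp q b c u t x ≤ 0) (hu_init : ∀ x, u s x ≤ 0)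
    (hψ : IsC12On s T ψ) (hψ_super : ∀ t ∈ Ioc s T, ∀ x, 0 < parabolicOp q b c ψ t x)
    (hψ_init : ∀ x, 0 ≤ ψ s x)
    (hψ_coercive : ∀ R, ∀ᶠ x in cocompact (ES N), ∀ t ∈ Icc s T, R ≤ ψ t x) :
    ∀ t ∈ Icc s T, ∀ x, u t x ≤ 0 := by
  obtain ⟨M, hM⟩ := hu_bdd
  have hε : ∀ ε > 0, ∀ t ∈ Icc s T, ∀ x, u t x - ε * ψ t x ≤ 0 := by
    intro ε hε
    have hεψ : IsC12On s T fun t x => ε * ψ t x := hψ.time_mul (differentiable_const ε)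
    refine nonpos_of_parabolicOp_neg (b := b) hQ hc (hu.sub hεψ) (fun t ht x => ?_) (fun x => ?_) ?_
    · rw [parabolicOp_sub hu hεψ ht, parabolicOp_time_mul (differentiableAt_const ε)
        (hψ.differentiableAt x t ht), deriv_const]
      nlinarith [hu_sub t ht x, hψ_super t ht x]
    · nlinarith [hu_init x, hψ_init x]
    · filter_upwards [hψ_coercive ((M + 1) / ε)] with x hx t ht
      linarith [hM t ht x, (div_le_iff₀' hε).1 (hx t ht)]
  intro t ht x
  have hlim : Tendsto (fun ε : ℝ => ε * ψ t x) (𝓝[>] 0) (𝓝 0) :=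
    ((continuous_mul_const (ψ t x)).tendsto' 0 0 (zero_mul _)).mono_left nhdsWithin_le_nhds
  exact ge_of_tendsto hlim (eventually_nhdsWithin_of_forall fun ε hε' => by
    linarith [hε ε hε' t ht x])

theorem nonpos_of_parabolicOp_nonpos_of_lyapunov {φ : ES N → ℝ} {lam M : ℝ} (hlam : 0 < lam)
    (hφ_pos : ∀ x, 0 < φ x) (hφ : ContDiff ℝ 2 φ)
    (hφ_coercive : Tendsto φ (cocompact (ES N)) atTop)
    (hφ_lyap : ∀ t ∈ Ioc s T, ∀ x, Aop q b c φ t x - lam * φ x ≤ M)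
    {u : ℝ → ES N → ℝ} (hu : IsC12On s T u) (hu_bdd : ∃ M, ∀ t ∈ Icc s T, ∀ x, u t x ≤ M)
    (hu_sub : ∀ t ∈ Ioc s T, ∀ x, parabolicOp q b c u t x ≤ 0) (hu_init : ∀ x, u s x ≤ 0) :
    ∀ t ∈ Icc s T, ∀ x, u t x ≤ 0 := by
  set K := (|M| + 1) / lam
  have hK : lam * K = |M| + 1 := mul_div_cancel₀ _ hlam.ne'
  have hK0 : 0 < K := by positivity
  have hexp : ∀ t, HasDerivAt (fun t => Real.exp (lam * (t - s)))
      (Real.exp (lam * (t - s)) * lam) t := fun t => by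
    simpa using (((hasDerivAt_id t).sub_const s).const_mul lam).exp
  refine nonpos_of_parabolicOp_nonpos_of_barrier hQ hc hu hu_bdd hu_sub hu_init
    (ψ := fun t x => Real.exp (lam * (t - s)) * (φ x + K))
    ((isC12On_of_contDiff (hφ.add contDiff_const)).time_mul fun t => (hexp t).differentiableAt)
    (fun t ht x => ?_) (fun x => by simpa using (hφ_pos x).le.trans (le_add_of_nonneg_right hK0.le))
    fun R => ?_
  · rw [parabolicOp_time_mul (hexp t).differentiableAt (differentiableAt_const _),
      parabolicOp_time_indep, Aop_add_const, (hexp t).deriv]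
    have hsuper : 0 < lam * (φ x + K) - (Aop q b c φ t x + c t x * K) := by
      nlinarith [hφ_lyap t ht x, hc t ht x, le_abs_self M]
    nlinarith [Real.exp_pos (lam * (t - s))]
  · filter_upwards [hφ_coercive.eventually_ge_atTop R] with x hx t ht
    have h1 : 1 ≤ Real.exp (lam * (t - s)) := Real.one_le_exp (by nlinarith [ht.1])
    nlinarith [hφ_pos x]

end MaximumPrinciple

theorem maximum_principle_smooth_general {N : ℕ} {T : ℝ} {q : ℝ → ES N → Fin N → Fin N → ℝ}
    {b : ℝ → ES N → Fin N → ℝ} {c : ℝ → ES N → ℝ} (H : Hyp N T q b c)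
    (s : ℝ) (hs : s ∈ Ico (0:ℝ) T) (u : ℝ → ES N → ℝ)
    (hbd : ∃ M, ∀ t ∈ Icc s T, ∀ x, |u t x| ≤ M)
    (hcont : ContinuousOn (fun p : ℝ × ES N => u p.1 p.2) (Icc s T ×ˢ univ))
    (hx : ∀ t ∈ Ioc s T, ContDiff ℝ 2 (u t))
    (ht : ∀ x, ∀ t ∈ Ioc s T, DifferentiableAt ℝ (fun t' => u t' x) t)
    (hineq : ∀ t ∈ Ioc s T, ∀ x, deriv (fun t' => u t' x) t - Aop q b c (u t) t x ≤ 0)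
    (hinit : ∀ x, u s x ≤ 0) :
    ∀ t ∈ Icc s T, ∀ x, u t x ≤ 0 := by
  obtain ⟨Mu, hMu⟩ := hbd
  obtain ⟨φ, lam, hlam, hφ_pos, hφ, hφ_coercive, M, hM⟩ := H.liap
  have hIcc : ∀ t ∈ Ioc s T, t ∈ Icc (0:ℝ) T := fun t ht => ⟨hs.1.trans ht.1.le, ht.2⟩
  set a := max H.c₀ 0
  set E : ℝ → ℝ := fun t => Real.exp (-a * (t - s))
  have hE : ∀ t ∈ Icc s T, 0 < E t ∧ E t ≤ 1 := fun t ht =>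
    ⟨Real.exp_pos _, Real.exp_le_one_iff.2 (by nlinarith [ht.1, le_max_right H.c₀ 0])⟩
  have hlyap : ∀ t ∈ Ioc s T, ∀ x, Aop q b (fun t x => c t x - a) φ t x - lam * φ x ≤ M :=
    fun t ht x => by
      rw [Aop_sub_const_potential]
      nlinarith [hM t (hIcc t ht) x, hφ_pos x, le_max_right H.c₀ 0]
  have hsub : ∀ t ∈ Ioc s T, ∀ x,
      parabolicOp q b (fun t x => c t x - a) (fun t x => E t * u t x) t x ≤ 0 := fun t ht' x => by
    rw [parabolicOp_exp_mul a (ht x t ht')]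
    exact mul_nonpos_of_nonneg_of_nonpos (Real.exp_pos _).le (hineq t ht' x)
  have hbdd : ∀ t ∈ Icc s T, ∀ x, E t * u t x ≤ Mu := fun t ht' x => by
    nlinarith [hE t ht', le_abs_self (u t x), hMu t ht' x, abs_nonneg (u t x)]
  have hw := nonpos_of_parabolicOp_nonpos_of_lyapunov (q := q) (b := b)
    (fun t ht x => H.posSemidef (hIcc t ht) x)
    (fun t ht x => by linarith [H.c_ub t (hIcc t ht) x, le_max_left H.c₀ 0]) hlam hφ_pos hφ
    hφ_coercive hlyap ((⟨hcont, hx, ht⟩ : IsC12On s T u).time_mul (g := E) (by fun_prop))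
    ⟨Mu, hbdd⟩ hsub (by simpa [E] using hinit)
  exact fun t ht' x => nonpos_of_mul_nonpos_right (hw t ht' x) (hE t ht').1

/-- Proposition `maximum` of the paper. Under Hypotheses (H), if
`u ∈ C_b([s,T] × ℝ^N) ∩ C^{1,2}((s,T] × ℝ^N)` satisfies `D_t u - 𝒜 u ≤ 0` on `(s,T] × ℝ^N`
and `u(s,·) ≤ 0`, then `u ≤ 0` on `[s,T] × ℝ^N`. -/
theorem maximum_principle_smooth {N : ℕ} {T : ℝ} {q : ℝ → ES N → Fin N → Fin N → ℝ}
    {b : ℝ → ES N → Fin N → ℝ} {c : ℝ → ES N → ℝ} (H : Hyp N T q b c)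
    (s : ℝ) (hs : s ∈ Ico (0:ℝ) T) (u : ℝ → ES N → ℝ)
    (hbd : ∃ M, ∀ t ∈ Icc s T, ∀ x, |u t x| ≤ M)
    (hcont : ContinuousOn (fun p : ℝ × ES N => u p.1 p.2) (Icc s T ×ˢ univ))
    (hx : ∀ t ∈ Ioc s T, ContDiff ℝ 2 (u t))
    (ht : ∀ x, ∀ t ∈ Ioc s T, DifferentiableAt ℝ (fun t' => u t' x) t)
    (hdtc : ContinuousOn (fun p : ℝ × ES N => deriv (fun t' => u t' p.2) p.1) (Ioc s T ×ˢ univ))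
    (hd1c : ∀ i, ContinuousOn (fun p : ℝ × ES N => pd1 (u p.1) i p.2) (Ioc s T ×ˢ univ))
    (hd2c : ∀ i j, ContinuousOn (fun p : ℝ × ES N => pd2 (u p.1) i j p.2) (Ioc s T ×ˢ univ))
    (hineq : ∀ t ∈ Ioc s T, ∀ x, deriv (fun t' => u t' x) t - Aop q b c (u t) t x ≤ 0)
    (hinit : ∀ x, u s x ≤ 0) :
    ∀ t ∈ Icc s T, ∀ x, u t x ≤ 0 :=
  maximum_principle_smooth_general H s hs u hbd hcont hx ht hineq hinit
end
end

section
/- Let θ ∈ (0,1) and let f ∈ M^{0,θ}([0,T]×ℝ^N). Define F(t,x) = ∫_0^t f(s,x) ds for (t,x) ∈ [0,T]×ℝ^N. Then there exists a measurable set C ⊆ [0,T], whose complement in [0,T] is Lebesgue-negligible, such that for every (t,x) ∈ C×ℝ^N the function F(·,x) is differentiable at t and D_t F(t,x) = f(t,x). -/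
/-!
By the Lebesgue differentiation theorem, almost every `t ∈ [0,T]` is a point of differentiability
of `F(·,d) = ∫₀^· f(s,d) ds` with derivative `f(t,d)`, simultaneously for all `d` in a countable
dense subset `D` of `ℝ^N`. The Hölder bound, uniform in `s`, makes the family `f(s,·)`
equicontinuous; hence for `d ∈ D` close to `x` the increments of `F(·,x)` and `F(·,d)` differ by at
most `ε |u - t|` and `|f(t,x) - f(t,d)| ≤ ε`, which forces `F(·,x)` to be differentiable at `t`
with derivative `f(t,x)`.
-/

open Set Filter MeasureTheory Metric
open scoped Topology ENNReal

noncomputable section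

/-- Membership in `M^{0,θ}([0,T] × ℝ^N)`: `f` is measurable, `f(t,·) ∈ C^θ(B(0,R))` for every
`t ∈ [0,T]` and `R > 0`, and `sup_{t ∈ [0,T]} ‖f(t,·)‖_{C^θ(B(0,R))} < ∞` for every `R > 0`. -/
def MemM0 {N : ℕ} (T θ : ℝ) (f : ℝ → ES N → ℝ) : Prop :=
  Measurable (fun p : ℝ × ES N => f p.1 p.2) ∧
  ∀ R > (0:ℝ), ∃ K : ℝ, ∀ t ∈ Icc (0:ℝ) T,
    (∀ x ∈ closedBall (0 : ES N) R, |f t x| ≤ K) ∧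
    (∀ x ∈ closedBall (0 : ES N) R, ∀ y ∈ closedBall (0 : ES N) R,
      |f t x - f t y| ≤ K * ‖x - y‖ ^ θ)

theorem Filter.Eventually.exists_measurableSet_subset {α : Type*} [MeasurableSpace α]
    {μ : Measure α} {s : Set α} {p : α → Prop} (h : ∀ᵐ x ∂μ, x ∈ s → p x) (hs : MeasurableSet s) :
    ∃ C, MeasurableSet C ∧ C ⊆ s ∧ μ (s \ C) = 0 ∧ ∀ x ∈ C, p x := by
  obtain ⟨S, hS_ae, hS, hp⟩ := h.exists_measurable_mem
  refine ⟨s ∩ S, hs.inter hS, inter_subset_left, ?_, fun x hx => hp x hx.2 hx.1⟩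
  exact measure_mono_null (fun x hx => hx.2 ∘ And.intro hx.1) (mem_ae_iff.1 hS_ae)

section Approximation

variable {𝕜 : Type*} [NontriviallyNormedField 𝕜] {E : Type*} [NormedAddCommGroup E]
  [NormedSpace 𝕜 E]

theorem hasDerivAt_of_forall_approx {F : 𝕜 → E} {f' : E} {t : 𝕜}
    (h : ∀ ε > 0, ∃ G : 𝕜 → E, ∃ g' : E, HasDerivAt G g' t ∧ ‖f' - g'‖ ≤ ε ∧
      ∀ᶠ u in 𝓝 t, ‖(F u - F t) - (G u - G t)‖ ≤ ε * ‖u - t‖) :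
    HasDerivAt F f' t := by
  refine hasDerivAt_iff_isLittleO.2 <| Asymptotics.isLittleO_iff.2 fun c hc => ?_
  obtain ⟨G, g', hG, hfg, hFG⟩ := h (c / 3) (by positivity)
  filter_upwards [hFG, hG.isLittleO.def (by positivity : 0 < c / 3)] with u hFGu hGu
  calc ‖F u - F t - (u - t) • f'‖
      = ‖((F u - F t) - (G u - G t)) + (G u - G t - (u - t) • g') - (u - t) • (f' - g')‖ := by
        rw [smul_sub]; congr 1; abel
    _ ≤ c / 3 * ‖u - t‖ + c / 3 * ‖u - t‖ + ‖u - t‖ * (c / 3) := by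
        refine (norm_sub_le _ _).trans (add_le_add ((norm_add_le _ _).trans
          (add_le_add hFGu hGu)) ?_)
        rw [norm_smul]; gcongr
    _ = c * ‖u - t‖ := by ring

end Approximation

section Primitive

variable {E : Type*} [NormedAddCommGroup E] [NormedSpace ℝ E]

theorem norm_primitive_sub_sub_le {g h : ℝ → E} {a b t u C : ℝ}
    (hg : IntervalIntegrable g volume a b) (hh : IntervalIntegrable h volume a b)
    (hgh : ∀ s ∈ uIcc a b, ‖g s - h s‖ ≤ C) (ht : t ∈ uIcc a b) (hu : u ∈ uIcc a b) :
    ‖((∫ s in a..u, g s) - ∫ s in a..t, g s) - ((∫ s in a..u, h s) - ∫ s in a..t, h s)‖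
      ≤ C * |u - t| := by
  have hk : IntervalIntegrable (fun s => g s - h s) volume a b := hg.sub hh
  have hsub {v : ℝ} (hv : v ∈ uIcc a b) : uIcc a v ⊆ uIcc a b := uIcc_subset_uIcc left_mem_uIcc hv
  have hprim : ((∫ s in a..u, g s) - ∫ s in a..t, g s) - ((∫ s in a..u, h s) - ∫ s in a..t, h s)
      = ∫ s in t..u, g s - h s := by
    rw [← intervalIntegral.integral_interval_sub_left (hk.mono_set (hsub hu))
      (hk.mono_set (hsub ht)), intervalIntegral.integral_sub (hg.mono_set (hsub hu))
      (hh.mono_set (hsub hu)), intervalIntegral.integral_sub (hg.mono_set (hsub ht))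
      (hh.mono_set (hsub ht))]
    abel
  rw [hprim]
  exact intervalIntegral.norm_integral_le_of_norm_le_const fun s hs =>
    hgh s (uIcc_subset_uIcc ht hu (uIoc_subset_uIcc hs))

variable [CompleteSpace E] {X : Type*} [TopologicalSpace X] [TopologicalSpace.SeparableSpace X]

theorem ae_hasDerivAt_integral_of_equicontinuous {f : ℝ → X → E} {a b : ℝ}
    (hint : ∀ x, IntervalIntegrable (f · x) volume a b)
    (hequi : Equicontinuous fun s : Icc a b => f s) :
    ∀ᵐ t, t ∈ Icc a b → ∀ x, HasDerivAt (fun u => ∫ s in a..u, f s x) (f t x) t := by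
  obtain ⟨D, hD_count, hD_dense⟩ := TopologicalSpace.exists_countable_dense X
  have hD : ∀ᵐ t, ∀ d ∈ D, t ∈ uIcc a b → ∀ c ∈ uIcc a b,
      HasDerivAt (fun u => ∫ s in c..u, f s d) (f t d) t :=
    (ae_ball_iff hD_count).2 fun d _ => (hint d).ae_hasDerivAt_integral
  filter_upwards [hD, (Ioo_ae_eq_Icc (a := a) (b := b)).mem_iff] with t hDt hIoo ht x
  have ht' : t ∈ Ioo a b := hIoo.2 ht
  have hab : uIcc a b = Icc a b := uIcc_of_le (ht'.1.trans ht'.2).le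
  refine hasDerivAt_of_forall_approx fun ε hε => ?_
  obtain ⟨d, hdD, hd⟩ : ∃ d ∈ D, ∀ s : Icc a b, dist (f s x) (f s d) < ε :=
    ((mem_closure_iff_frequently.1 (hD_dense x)).and_eventually
      (Metric.equicontinuousAt_iff_right.1 (hequi x) ε hε)).exists
  have hclose : ∀ s ∈ uIcc a b, ‖f s x - f s d‖ ≤ ε := fun s hs =>
    (dist_eq_norm (f s x) (f s d) ▸ hd ⟨s, hab ▸ hs⟩).le
  refine ⟨fun u => ∫ s in a..u, f s d, f t d,
    hDt d hdD (hab ▸ ht) a left_mem_uIcc, hclose t (hab ▸ ht), ?_⟩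
  filter_upwards [Icc_mem_nhds ht'.1 ht'.2] with u hu
  rw [Real.norm_eq_abs]
  exact norm_primitive_sub_sub_le (hint x) (hint d) hclose (hab ▸ ht) (hab ▸ hu)

end Primitive

namespace MemM0

variable {N : ℕ} {T θ : ℝ} {f : ℝ → ES N → ℝ}

theorem exists_bound (hf : MemM0 T θ f) (x : ES N) :
    ∃ K, ∀ s ∈ Icc (0:ℝ) T, |f s x| ≤ K ∧
      ∀ y ∈ closedBall (0 : ES N) (‖x‖ + 1), |f s x - f s y| ≤ K * ‖x - y‖ ^ θ := by
  have hx : x ∈ closedBall (0 : ES N) (‖x‖ + 1) := by simp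
  obtain ⟨K, hK⟩ := hf.2 (‖x‖ + 1) (by positivity)
  exact ⟨K, fun s hs => ⟨(hK s hs).1 x hx, (hK s hs).2 x hx⟩⟩

theorem intervalIntegrable (hf : MemM0 T θ f) (hT : 0 ≤ T) (x : ES N) :
    IntervalIntegrable (f · x) volume 0 T := by
  obtain ⟨K, hK⟩ := hf.exists_bound x
  refine IntegrableOn.intervalIntegrable (Measure.integrableOn_of_bounded (M := K) ?_
    (hf.1.comp (measurable_id.prodMk measurable_const)).aestronglyMeasurable ?_)
  · simp
  · rw [uIcc_of_le hT]
    exact (ae_restrict_iff' measurableSet_Icc).2 (ae_of_all _ fun s hs => (hK s hs).1)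

theorem equicontinuous (hf : MemM0 T θ f) (hθ : 0 < θ) :
    Equicontinuous fun s : Icc (0:ℝ) T => f s := by
  intro x
  obtain ⟨K, hK⟩ := hf.exists_bound x
  have hHolder : Tendsto (fun y => K * ‖x - y‖ ^ θ) (𝓝 x) (𝓝 0) := by
    have hcont : Continuous fun y : ES N => K * ‖x - y‖ ^ θ :=
      continuous_const.mul <| (continuous_const.sub continuous_id).norm.rpow_const
        fun _ => Or.inr hθ.le
    simpa [Real.zero_rpow hθ.ne'] using hcont.tendsto x
  refine Metric.equicontinuousAt_iff_right.2 fun ε hε => ?_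
  filter_upwards [hHolder.eventually_lt_const hε,
    closedBall_mem_nhds_of_mem (by simp : x ∈ ball (0 : ES N) (‖x‖ + 1))] with y hy hyR s
  exact (hK s s.2).2 y hyR |>.trans_lt hy

end MemM0

theorem primitive_ae_differentiable_general (N : ℕ) (T θ : ℝ) (hT : 0 < T)
    (hθ : θ ∈ Ioo (0:ℝ) 1) (f : ℝ → ES N → ℝ) (hf : MemM0 T θ f) :
    ∃ C : Set ℝ, MeasurableSet C ∧ C ⊆ Icc (0:ℝ) T ∧ volume (Icc (0:ℝ) T \ C) = 0 ∧
      ∀ t ∈ C, ∀ x : ES N,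
        HasDerivAt (fun τ => ∫ s in (0:ℝ)..τ, f s x) (f t x) t :=
  (ae_hasDerivAt_integral_of_equicontinuous (hf.intervalIntegrable hT.le)
    (hf.equicontinuous hθ.1)).exists_measurableSet_subset measurableSet_Icc

/-- Lemma `lemma-1`(ii) of the paper. Let `θ ∈ (0,1)`,
`f ∈ M^{0,θ}([0,T] × ℝ^N)` and `F(t,x) = ∫₀ᵗ f(s,x) ds`. Then there is a measurable set
`C ⊆ [0,T]` with negligible complement in `[0,T]` such that, for every `(t,x) ∈ C × ℝ^N`,
`F(·,x)` is differentiable at `t` with `D_t F(t,x) = f(t,x)`. -/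
theorem primitive_ae_differentiable (N : ℕ) (hN : 1 ≤ N) (T θ : ℝ) (hT : 0 < T)
    (hθ : θ ∈ Ioo (0:ℝ) 1) (f : ℝ → ES N → ℝ) (hf : MemM0 T θ f) :
    ∃ C : Set ℝ, MeasurableSet C ∧ C ⊆ Icc (0:ℝ) T ∧ volume (Icc (0:ℝ) T \ C) = 0 ∧
      ∀ t ∈ C, ∀ x : ES N,
        HasDerivAt (fun τ => ∫ s in (0:ℝ)..τ, f s x) (f t x) t :=
  primitive_ae_differentiable_general N T θ hT hθ f hf
end
end

section
/- Let θ ∈ (0,1) and let f ∈ M^{0,θ}([0,T]×ℝ^N). For each n ∈ ℕ define the time-mollification f^{(n)}(t,x) = (n/(4π))^{1/2} ∫_0^T f(τ,x) exp(−(n/4)(t−τ)²) dτ for (t,x) ∈ [0,T]×ℝ^N. Then there exist a strictly increasing sequence of integers (n_k) and a measurable set E ⊆ [0,T], whose complement in [0,T] is Lebesgue-negligible, such that f^{(n_k)}(t,x) → f(t,x) as k → +∞ for every (t,x) ∈ E×ℝ^N. -/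
open Set Filter MeasureTheory Metric
open scoped Topology ENNReal

noncomputable section

/-- The Gaussian time-mollification
`f^{(n)}(t,x) = √(n/(4π)) ∫₀ᵀ f(τ,x) exp(-(n/4)(t-τ)²) dτ`. -/
def timeMollify {N : ℕ} (T : ℝ) (f : ℝ → ES N → ℝ) (n : ℕ) (t : ℝ) (x : ES N) : ℝ :=
  Real.sqrt (n / (4 * Real.pi)) *
    ∫ τ in (0:ℝ)..T, f τ x * Real.exp (-((n : ℝ) / 4) * (t - τ) ^ 2)

/-!
With `g_x := 1_{[0,T]} f(·,x)` and `Z ~ N(0,2)`, the mollification is the Gaussian average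
`f^{(n)}(t,x) = E[g_x(t + Z/√n)]`. Continuity of translation in `L¹(ℝ)` and dominated convergence
give `f^{(n)}(·,x) → g_x` in `L¹` for every `x`. Along a diagonal subsequence whose `L¹` errors at
the points of a countable dense set are summable, convergence holds almost everywhere at all
those points simultaneously. Finally `f^{(n)}(t,·)` inherits, uniformly in `n`, the local Hölder
bounds that `f(τ,·)` satisfies uniformly in `τ`, so the family is equicontinuous and convergence
spreads from the dense set to every `x`.
-/

open ProbabilityTheory
open scoped NNReal Real

section Translation

variable {G E : Type*} [NormedAddCommGroup G] [MeasurableSpace G] [BorelSpace G]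
  [NormedAddCommGroup E] {μ : Measure G}

theorem tendsto_lintegral_enorm_comp_add_sub [IsLocallyFiniteMeasure μ]
    [μ.InnerRegularCompactLTTop] [μ.IsAddLeftInvariant] {g : G → E} (hg : Integrable g μ) :
    Tendsto (fun s => ∫⁻ t, ‖g (s + t) - g t‖ₑ ∂μ) (𝓝 0) (𝓝 0) := by
  have : Fact ((1 : ℝ≥0∞) ≠ ∞) := ⟨ENNReal.one_ne_top⟩
  set g₁ := hg.toL1 g
  have hcont : Tendsto (fun s : G => DomAddAct.mk s +ᵥ g₁) (𝓝 0) (𝓝 g₁) := by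
    simpa only [DomAddAct.mk_zero, zero_vadd] using
      ((DomAddAct.continuous_mk (M := G)).tendsto 0).vadd_const g₁
  refine (tendsto_iff_edist_tendsto_0.1 hcont).congr fun s => ?_
  rw [Lp.edist_def, ← eLpNorm_one_eq_lintegral_enorm]
  refine eLpNorm_congr_ae ?_
  filter_upwards [DomAddAct.vadd_Lp_ae_eq (DomAddAct.mk s) g₁, hg.coeFn_toL1,
    (measurePreserving_add_left μ s).quasiMeasurePreserving.ae_eq_comp hg.coeFn_toL1]
    with t ht₁ ht₂ ht₃
  simp only [Pi.sub_apply]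
  rw [ht₁, ht₂]
  exact congrArg (· - g t) ht₃

variable [NormedSpace ℝ G] [SecondCountableTopology G] [NormedSpace ℝ E] [CompleteSpace E]
  {ν : Measure G} [IsProbabilityMeasure ν]

theorem lintegral_enorm_integral_add_smul_sub_le [SFinite μ] {g : G → E}
    (hgm : StronglyMeasurable g) {K : ℝ} (hgK : ∀ t, ‖g t‖ ≤ K) (c : ℝ) :
    ∫⁻ t, ‖∫ u, g (t + c • u) ∂ν - g t‖ₑ ∂μ ≤ ∫⁻ u, ∫⁻ t, ‖g (c • u + t) - g t‖ₑ ∂μ ∂ν := by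
  have hpoint : ∀ t, ‖∫ u, g (t + c • u) ∂ν - g t‖ₑ ≤ ∫⁻ u, ‖g (t + c • u) - g t‖ₑ ∂ν := by
    intro t
    have hint : Integrable (fun u => g (t + c • u)) ν :=
      .of_bound (hgm.comp_measurable (by fun_prop)).aestronglyMeasurable K
        (ae_of_all _ fun u => hgK _)
    calc ‖∫ u, g (t + c • u) ∂ν - g t‖ₑ = ‖∫ u, (g (t + c • u) - g t) ∂ν‖ₑ := by
          rw [integral_sub hint (integrable_const _), integral_const, probReal_univ, one_smul]
      _ ≤ ∫⁻ u, ‖g (t + c • u) - g t‖ₑ ∂ν := enorm_integral_le_lintegral_enorm _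
  calc ∫⁻ t, ‖∫ u, g (t + c • u) ∂ν - g t‖ₑ ∂μ
      ≤ ∫⁻ t, ∫⁻ u, ‖g (t + c • u) - g t‖ₑ ∂ν ∂μ := lintegral_mono hpoint
    _ = ∫⁻ u, ∫⁻ t, ‖g (t + c • u) - g t‖ₑ ∂μ ∂ν :=
        lintegral_lintegral_swap (((hgm.comp_measurable (by fun_prop)).sub
          (hgm.comp_measurable measurable_fst)).enorm.aemeasurable)
    _ = ∫⁻ u, ∫⁻ t, ‖g (c • u + t) - g t‖ₑ ∂μ ∂ν := by simp_rw [add_comm _ (c • _)]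

theorem tendsto_lintegral_enorm_integral_add_smul_sub [IsLocallyFiniteMeasure μ]
    [μ.InnerRegularCompactLTTop] [μ.IsAddLeftInvariant] {g : G → E}
    (hgm : StronglyMeasurable g) {K : ℝ} (hgK : ∀ t, ‖g t‖ ≤ K) (hgi : Integrable g μ) :
    Tendsto (fun c : ℝ => ∫⁻ t, ‖∫ u, g (t + c • u) ∂ν - g t‖ₑ ∂μ) (𝓝 0) (𝓝 0) := by
  set ω : G → ℝ≥0∞ := fun s => ∫⁻ t, ‖g (s + t) - g t‖ₑ ∂μ
  have hωm : Measurable ω := Measurable.lintegral_prod_right'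
    ((hgm.comp_measurable (measurable_fst.add measurable_snd)).sub
      (hgm.comp_measurable measurable_snd)).enorm
  have hωK : ∀ s, ω s ≤ 2 * ∫⁻ t, ‖g t‖ₑ ∂μ := fun s => calc
    ω s ≤ ∫⁻ t, (‖g (s + t)‖ₑ + ‖g t‖ₑ) ∂μ := lintegral_mono fun t => enorm_sub_le
    _ = 2 * ∫⁻ t, ‖g t‖ₑ ∂μ := by
      rw [lintegral_add_right _ hgm.enorm, lintegral_add_left_eq_self (fun t => ‖g t‖ₑ), two_mul]
  have hωlim : Tendsto (fun c : ℝ => ∫⁻ u, ω (c • u) ∂ν) (𝓝 0) (𝓝 0) := by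
    have hlim := tendsto_lintegral_filter_of_dominated_convergence (μ := ν) (l := 𝓝 (0 : ℝ))
      (f := fun _ => 0) (fun _ => 2 * ∫⁻ t, ‖g t‖ₑ ∂μ)
      (.of_forall fun c => hωm.comp (measurable_const_smul c))
      (.of_forall fun c => ae_of_all _ fun u => hωK _)
      (by simpa using ENNReal.mul_ne_top ENNReal.ofNat_ne_top hgi.2.ne)
      (ae_of_all _ fun u => (tendsto_lintegral_enorm_comp_add_sub hgi).comp <|
        (continuous_id.smul continuous_const).tendsto' (0 : ℝ) (0 : G) (zero_smul ℝ u))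
    simpa using hlim
  exact tendsto_of_tendsto_of_tendsto_of_le_of_le tendsto_const_nhds hωlim (fun _ => zero_le)
    (lintegral_enorm_integral_add_smul_sub_le hgm hgK)

end Translation

theorem integral_gaussianReal_eq_integral_add_mul {E : Type*} [NormedAddCommGroup E]
    [NormedSpace ℝ E] (h : ℝ → E) (t : ℝ) {c : ℝ} (hc : c ≠ 0) (v : ℝ≥0) :
    ∫ τ, h τ ∂gaussianReal t (.mk (c ^ 2) (sq_nonneg c) * v) =
      ∫ u, h (t + c * u) ∂gaussianReal 0 v := by
  have hmap : (gaussianReal 0 v).map (fun u => t + c * u) =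
      gaussianReal t (.mk (c ^ 2) (sq_nonneg c) * v) := by
    rw [show (fun u => t + c * u) = (t + ·) ∘ (c * ·) from rfl,
      ← Measure.map_map (measurable_const_add t) (measurable_const_mul c),
      gaussianReal_map_const_mul, gaussianReal_map_const_add, mul_zero, zero_add]
  rw [← hmap]
  exact ((Homeomorph.addLeft t).measurableEmbedding.comp
    (Homeomorph.mulLeft₀ c hc).measurableEmbedding).integral_map h

theorem gaussianPDFReal_two_div_natCast {n : ℕ} (hn : n ≠ 0) (t τ : ℝ) :
    gaussianPDFReal t (2 / n) τ = √(n / (4 * π)) * Real.exp (-((n : ℝ) / 4) * (t - τ) ^ 2) := by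
  have hn' : (0 : ℝ) < n := by positivity
  rw [gaussianPDFReal, NNReal.coe_div, NNReal.coe_ofNat, NNReal.coe_natCast, ← Real.sqrt_inv]
  congr 2
  · field_simp; ring
  · field_simp; ring

theorem timeMollify_eq_integral_gaussianReal {N : ℕ} {T : ℝ} (hT : 0 ≤ T) (f : ℝ → ES N → ℝ)
    {n : ℕ} (hn : n ≠ 0) (t : ℝ) (x : ES N) :
    timeMollify T f n t x = ∫ τ, (Icc 0 T).indicator (f · x) τ ∂gaussianReal t (2 / n) := by
  rw [integral_gaussianReal_eq_integral_smul (by simpa using hn), timeMollify,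
    intervalIntegral.integral_of_le hT, ← integral_Icc_eq_integral_Ioc, ← integral_const_mul,
    ← integral_indicator measurableSet_Icc]
  congr 1 with τ
  by_cases hτ : τ ∈ Icc 0 T
  · rw [indicator_of_mem hτ, indicator_of_mem hτ, gaussianPDFReal_two_div_natCast hn, smul_eq_mul]
    ring
  · simp [hτ]

theorem integrable_indicator_Icc_of_abs_le {ν : Measure ℝ} [IsLocallyFiniteMeasure ν] {h : ℝ → ℝ}
    (hh : Measurable h) {a b K : ℝ} (hK : ∀ τ ∈ Icc a b, |h τ| ≤ K) :
    Integrable ((Icc a b).indicator h) ν :=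
  (integrable_indicator_iff measurableSet_Icc).2 <|
    Measure.integrableOn_of_bounded isCompact_Icc.measure_lt_top.ne hh.aestronglyMeasurable
      ((ae_restrict_iff' measurableSet_Icc).2 (ae_of_all _ hK))

section TimeMollify

variable {N : ℕ} {T : ℝ} {f : ℝ → ES N → ℝ}

theorem measurable_timeMollify (hfm : Measurable fun p : ℝ × ES N => f p.1 p.2) (n : ℕ)
    (x : ES N) : Measurable fun t => timeMollify T f n t x := by
  have hF : StronglyMeasurable fun p : ℝ × ℝ =>
      f p.2 x * Real.exp (-((n : ℝ) / 4) * (p.1 - p.2) ^ 2) :=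
    ((hfm.comp (measurable_snd.prodMk measurable_const)).mul (by fun_prop)).stronglyMeasurable
  simp only [timeMollify, intervalIntegral]
  exact ((hF.integral_prod_right'.sub hF.integral_prod_right').measurable).const_mul _

theorem abs_timeMollify_sub_le (hT : 0 ≤ T) (hfm : Measurable fun p : ℝ × ES N => f p.1 p.2)
    {x y : ES N} {K C : ℝ} (hx : ∀ τ ∈ Icc 0 T, |f τ x| ≤ K) (hy : ∀ τ ∈ Icc 0 T, |f τ y| ≤ K)
    (hxy : ∀ τ ∈ Icc 0 T, |f τ x - f τ y| ≤ C) (n : ℕ) (t : ℝ) :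
    |timeMollify T f n t x - timeMollify T f n t y| ≤ C := by
  have hC : 0 ≤ C := (abs_nonneg _).trans (hxy 0 ⟨le_rfl, hT⟩)
  rcases eq_or_ne n 0 with rfl | hn
  · simpa [timeMollify] using hC
  rw [timeMollify_eq_integral_gaussianReal hT f hn, timeMollify_eq_integral_gaussianReal hT f hn,
    ← integral_sub (integrable_indicator_Icc_of_abs_le hfm.of_uncurry_right hx)
      (integrable_indicator_Icc_of_abs_le hfm.of_uncurry_right hy)]
  rw [← Real.norm_eq_abs]
  refine le_of_le_of_eq (norm_integral_le_of_norm_le_const (μ := gaussianReal t (2 / n)) (C := C)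
    (ae_of_all _ fun τ => ?_)) (by simp)
  by_cases hτ : τ ∈ Icc 0 T
  · simpa [hτ] using hxy τ hτ
  · simpa [hτ] using hC

theorem tendsto_lintegral_edist_timeMollify (hT : 0 ≤ T)
    (hfm : Measurable fun p : ℝ × ES N => f p.1 p.2) {x : ES N} {K : ℝ}
    (hx : ∀ τ ∈ Icc 0 T, |f τ x| ≤ K) :
    Tendsto (fun n : ℕ => ∫⁻ t, edist (timeMollify T f n t x) ((Icc 0 T).indicator (f · x) t))
      atTop (𝓝 0) := by
  set g := (Icc 0 T).indicator (f · x)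
  have hgK : ∀ τ, ‖g τ‖ ≤ |K| := fun τ => by
    by_cases hτ : τ ∈ Icc 0 T
    · simpa [g, hτ] using (hx τ hτ).trans (le_abs_self K)
    · simp [g, hτ]
  have hc : Tendsto (fun n : ℕ => (√(n : ℝ))⁻¹) atTop (𝓝 0) :=
    tendsto_inv_atTop_zero.comp (Real.tendsto_sqrt_atTop.comp tendsto_natCast_atTop_atTop)
  refine ((tendsto_lintegral_enorm_integral_add_smul_sub (ν := gaussianReal 0 2)
    (hfm.of_uncurry_right.indicator measurableSet_Icc).stronglyMeasurable hgK
    (integrable_indicator_Icc_of_abs_le (ν := volume) hfm.of_uncurry_right hx)).comp hc).congr' ?_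
  filter_upwards [eventually_ne_atTop 0] with n hn
  have hvar : (2 / n : ℝ≥0) = .mk ((√(n : ℝ))⁻¹ ^ 2) (sq_nonneg _) * 2 := by
    ext
    rw [NNReal.coe_div, NNReal.coe_mul, NNReal.coe_mk, NNReal.coe_ofNat, NNReal.coe_natCast,
      inv_pow, Real.sq_sqrt n.cast_nonneg]
    ring
  refine lintegral_congr fun t => ?_
  rw [edist_eq_enorm_sub, timeMollify_eq_integral_gaussianReal hT f hn, hvar,
    integral_gaussianReal_eq_integral_add_mul _ _ (by positivity)]
  rfl

end TimeMollify

theorem ae_tendsto_zero_of_tsum_lintegral_ne_top {α : Type*} [MeasurableSpace α] {μ : Measure α}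
    {F : ℕ → α → ℝ≥0∞} (hF : ∀ k, AEMeasurable (F k) μ) (h : ∑' k, ∫⁻ a, F k a ∂μ ≠ ∞) :
    ∀ᵐ a ∂μ, Tendsto (fun k => F k a) atTop (𝓝 0) := by
  rw [← lintegral_tsum hF] at h
  filter_upwards [ae_lt_top' (AEMeasurable.tsum hF) h] with a ha
  exact ENNReal.tendsto_atTop_zero_of_tsum_ne_top ha.ne

theorem exists_strictMono_ae_tendsto_zero_of_tendsto_lintegral {α : Type*} [MeasurableSpace α]
    {μ : Measure α}
    {u : ℕ → ℕ → α → ℝ≥0∞} (hu : ∀ m n, AEMeasurable (u m n) μ)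
    (h : ∀ m, Tendsto (fun n => ∫⁻ a, u m n a ∂μ) atTop (𝓝 0)) :
    ∃ φ : ℕ → ℕ, StrictMono φ ∧ ∀ᵐ a ∂μ, ∀ m, Tendsto (fun k => u m (φ k) a) atTop (𝓝 0) := by
  obtain ⟨φ, hφ, hφu⟩ : ∃ φ : ℕ → ℕ, StrictMono φ ∧
      ∀ k, ∀ m ∈ Iic k, ∫⁻ a, u m (φ k) a ∂μ ≤ 2⁻¹ ^ k :=
    extraction_forall_of_eventually fun k => (eventually_all_finite (finite_Iic k)).2 fun m _ =>
      ((h m).eventually_lt_const (ENNReal.pow_pos (ENNReal.inv_pos.2 ENNReal.ofNat_ne_top) k)).mono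
        fun _ hn => hn.le
  refine ⟨φ, hφ, ae_all_iff.2 fun m => ?_⟩
  have hsum : ∑' k, ∫⁻ a, u m (φ (k + m)) a ∂μ ≠ ∞ := by
    refine ne_top_of_le_ne_top ?_ (ENNReal.tsum_le_tsum fun k =>
      (hφu (k + m) m (by simp)).trans (pow_le_pow_right_of_le_one' (by simp) (k.le_add_right m)))
    rw [ENNReal.tsum_geometric, ENNReal.one_sub_inv_two, inv_inv]
    exact ENNReal.ofNat_ne_top
  filter_upwards [ae_tendsto_zero_of_tsum_lintegral_ne_top (fun k => hu _ _) hsum] with a ha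
  exact (tendsto_add_atTop_iff_nat m).1 ha

theorem equicontinuous_of_dist_le_mul_rpow {ι X Y : Type*} [SeminormedAddCommGroup X]
    [PseudoMetricSpace Y] {F : ι → X → Y} {θ : ℝ} (hθ : 0 < θ)
    (hF : ∀ R > 0, ∃ K, ∀ i, ∀ x ∈ closedBall (0 : X) R, ∀ y ∈ closedBall (0 : X) R,
      dist (F i x) (F i y) ≤ K * ‖x - y‖ ^ θ) :
    Equicontinuous F := by
  intro x₀
  obtain ⟨K, hK⟩ := hF (‖x₀‖ + 1) (by positivity)
  refine equicontinuousAt_of_continuity_modulus (fun x => K * ‖x₀ - x‖ ^ θ) ?_ F ?_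
  · have hnorm : Tendsto (fun x => ‖x₀ - x‖) (𝓝 x₀) (𝓝 0) := by
      simpa using ((continuous_const.sub continuous_id).norm.tendsto x₀ :
        Tendsto (fun x => ‖x₀ - x‖) (𝓝 x₀) (𝓝 ‖x₀ - x₀‖))
    simpa [Real.zero_rpow hθ.ne'] using (hnorm.rpow_const (Or.inr hθ.le)).const_mul K
  · filter_upwards [ball_mem_nhds x₀ one_pos] with x hx i
    have hx' : ‖x‖ ≤ ‖x₀‖ + 1 := by
      have := norm_le_norm_add_norm_sub' x x₀
      rw [← dist_eq_norm] at this
      linarith [mem_ball.1 hx]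
    exact hK i x₀ (by simp) x (by simpa using hx')

namespace MemM0

variable {N : ℕ} {T θ : ℝ} {f : ℝ → ES N → ℝ}

theorem exists_abs_le (hf : MemM0 T θ f) (x : ES N) : ∃ K, ∀ τ ∈ Icc 0 T, |f τ x| ≤ K := by
  obtain ⟨K, hK⟩ := hf.2 (‖x‖ + 1) (by positivity)
  exact ⟨K, fun τ hτ => (hK τ hτ).1 x (by simp)⟩

theorem continuous (hθ : 0 < θ) (hf : MemM0 T θ f) {t : ℝ} (ht : t ∈ Icc 0 T) :
    Continuous (f t) :=
  (equicontinuous_of_dist_le_mul_rpow (F := fun _ : Unit => f t) hθ fun R hR =>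
    (hf.2 R hR).imp fun _ hK _ x hx y hy => (hK t ht).2 x hx y hy).continuous ()

theorem equicontinuous_timeMollify (hT : 0 ≤ T) (hθ : 0 < θ) (hf : MemM0 T θ f) (t : ℝ) :
    Equicontinuous fun n => timeMollify T f n t :=
  equicontinuous_of_dist_le_mul_rpow hθ fun R hR => (hf.2 R hR).imp fun _ hK n x hx y hy =>
    abs_timeMollify_sub_le hT hf.1 (fun τ hτ => (hK τ hτ).1 x hx) (fun τ hτ => (hK τ hτ).1 y hy)
      (fun τ hτ => (hK τ hτ).2 x hx y hy) n t

end MemM0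

theorem timeMollify_subsequence_converges_general (N : ℕ) (T θ : ℝ) (hT : 0 < T)
    (hθ : θ ∈ Ioo (0:ℝ) 1) (f : ℝ → ES N → ℝ) (hf : MemM0 T θ f) :
    ∃ nk : ℕ → ℕ, StrictMono nk ∧
      ∃ E : Set ℝ, MeasurableSet E ∧ E ⊆ Icc (0:ℝ) T ∧ volume (Icc (0:ℝ) T \ E) = 0 ∧
        ∀ t ∈ E, ∀ x : ES N,
          Tendsto (fun k => timeMollify T f (nk k) t x) atTop (𝓝 (f t x)) := by
  set D := TopologicalSpace.denseSeq (ES N)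
  obtain ⟨nk, hnk, hae⟩ := exists_strictMono_ae_tendsto_zero_of_tendsto_lintegral (μ := volume)
    (u := fun m n t => edist (timeMollify T f n t (D m)) ((Icc 0 T).indicator (f · (D m)) t))
    (fun m n => ((measurable_timeMollify hf.1 n (D m)).edist
      (hf.1.of_uncurry_right.indicator measurableSet_Icc)).aemeasurable)
    (fun m => (hf.exists_abs_le (D m)).elim fun _ hK =>
      tendsto_lintegral_edist_timeMollify hT.le hf.1 hK)
  set A := {t | ∀ m, Tendsto (fun k => timeMollify T f (nk k) t (D m)) atTop
    (𝓝 ((Icc 0 T).indicator (f · (D m)) t))}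
  have hA : volume Aᶜ = 0 :=
    ae_iff.1 (hae.mono fun t ht m => tendsto_iff_edist_tendsto_0.2 (ht m))
  refine ⟨nk, hnk, Icc 0 T \ toMeasurable volume Aᶜ,
    measurableSet_Icc.diff (measurableSet_toMeasurable _ _), Set.sdiff_subset,
    measure_mono_null (by simp) ((measure_toMeasurable _).trans hA), ?_⟩
  rintro t ⟨htT, htA⟩ x
  have ht : t ∈ A := not_not.1 fun h => htA (subset_toMeasurable _ _ h)
  refine (((hf.equicontinuous_timeMollify hT.le hθ.1 t).comp nk).isClosed_setOfPred_tendsto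
    (hf.continuous hθ.1 htT)).closure_subset_iff.2 ?_ (TopologicalSpace.denseRange_denseSeq _ x)
  rintro _ ⟨m, rfl⟩
  simpa [indicator_of_mem htT] using ht m

/-- from the proof of Lemma `lemma-2` of the paper. If `θ ∈ (0,1)` and
`f ∈ M^{0,θ}([0,T] × ℝ^N)`, then there exist a strictly increasing sequence `(n_k)` of integers
and a measurable set `E ⊆ [0,T]` with negligible complement in `[0,T]` such that
`f^{(n_k)}(t,x) → f(t,x)` as `k → ∞` for every `(t,x) ∈ E × ℝ^N`. -/
theorem timeMollify_subsequence_converges (N : ℕ) (hN : 1 ≤ N) (T θ : ℝ) (hT : 0 < T)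
    (hθ : θ ∈ Ioo (0:ℝ) 1) (f : ℝ → ES N → ℝ) (hf : MemM0 T θ f) :
    ∃ nk : ℕ → ℕ, StrictMono nk ∧
      ∃ E : Set ℝ, MeasurableSet E ∧ E ⊆ Icc (0:ℝ) T ∧ volume (Icc (0:ℝ) T \ E) = 0 ∧
        ∀ t ∈ E, ∀ x : ES N,
          Tendsto (fun k => timeMollify T f (nk k) t x) atTop (𝓝 (f t x)) :=
  timeMollify_subsequence_converges_general N T θ hT hθ f hf
end
end
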